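/- arXiv:quant-ph/0612013 — 2 statements merged into one kernel-verified Lean document; each statement's English description precedes it below -/
import Mathlib

section
/- Let ψ₁, ψ₂ ∈ ℂ² ⊗ ℂ² be linearly independent product vectors. Then the orthogonal complement of span{ψ₁, ψ₂} is spanned by two product vectors. -/
/-- The elementary tensor `a ⊗ b` of two Euclidean-space vectors, realised in
`EuclideanSpace ℂ (ι × κ)` (which carries the induced tensor inner product). -/
noncomputable def tens {ι κ : Type*} [Fintype ι] [Fintype κ]
    (a : EuclideanSpace ℂ ι) (b : EuclideanSpace ℂ κ) :
    EuclideanSpace ℂ (ι × κ) :=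
  WithLp.toLp 2 (fun p : ι × κ => a p.1 * b p.2)

/-- The standard basis vector `eᵢ` of `ℂ²`. -/
noncomputable def e (i : Fin 2) : EuclideanSpace ℂ (Fin 2) := EuclideanSpace.single i 1

/-! Write `ψ₁ = a ⊗ b`, `ψ₂ = c ⊗ d`, and let `x'` be a nonzero vector of `ℂ²` orthogonal to `x`.
If `a, c` are independent then so are `a', c'`, and `a' ⊗ d'`, `c' ⊗ b'` are independent and
orthogonal to both `ψᵢ`; if `c` is a multiple of `a`, the same holds for `a' ⊗ e₀`, `a' ⊗ e₁`.
Since `2 + 2 = 4 = dim (ℂ² ⊗ ℂ²)`, either pair spans the orthogonal complement. -/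

section LinearAlgebra

variable {K V : Type*} [Field K] [AddCommGroup V] [Module K V]

lemma finrank_span_pair {x y : V} (h : LinearIndependent K ![x, y]) :
    Module.finrank K (Submodule.span K {x, y}) = 2 := by
  rw [← Matrix.range_cons_cons_empty x y ![]]
  simpa using finrank_span_eq_card h

lemma span_pair_eq_top {x y : V} (h : LinearIndependent K ![x, y])
    (hV : Module.finrank K V = 2) : Submodule.span K {x, y} = ⊤ := by
  rw [← Matrix.range_cons_cons_empty x y ![]]
  exact h.span_eq_top_of_card_eq_finrank (by simp [hV])

end LinearAlgebra

section InnerProduct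

open Module

variable {𝕜 E : Type*} [RCLike 𝕜] [NormedAddCommGroup E] [InnerProductSpace 𝕜 E]

lemma exists_ne_zero_inner_eq_zero [FiniteDimensional 𝕜 E] (hE : 2 ≤ finrank 𝕜 E) (a : E) :
    ∃ v ≠ 0, inner 𝕜 a v = 0 := by
  have hdim := (𝕜 ∙ a).finrank_add_finrank_orthogonal
  have ha : finrank 𝕜 (𝕜 ∙ a) ≤ 1 := by simpa using finrank_span_le_card ({a} : Set E)
  obtain ⟨v, hv, hv0⟩ := Submodule.exists_mem_ne_zero_of_ne_bot
    (Submodule.one_le_finrank_iff.1 (by omega) : (𝕜 ∙ a)ᗮ ≠ ⊥)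
  exact ⟨v, hv0, Submodule.mem_orthogonal_singleton_iff_inner_right.1 hv⟩

lemma linearIndependent_pair_of_inner_eq_zero (hE : finrank 𝕜 E = 2) {a c a' c' : E}
    (hac : LinearIndependent 𝕜 ![a, c]) (ha' : a' ≠ 0) (hc' : c' ≠ 0)
    (haa' : inner 𝕜 a a' = 0) (hcc' : inner 𝕜 c c' = 0) : LinearIndependent 𝕜 ![a', c'] := by
  rw [LinearIndependent.pair_iff' ha']
  rintro r rfl
  have hmem : r • a' ∈ (Submodule.span 𝕜 {a, c})ᗮ := by
    rw [Submodule.span_insert, ← Submodule.inf_orthogonal]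
    exact ⟨Submodule.mem_orthogonal_singleton_iff_inner_right.2 (by simp [inner_smul_right, haa']),
      Submodule.mem_orthogonal_singleton_iff_inner_right.2 hcc'⟩
  rw [span_pair_eq_top hac hE, Submodule.top_orthogonal_eq_bot] at hmem
  exact hc' hmem

lemma Submodule.orthogonal_eq_of_le_of_finrank_add_eq [FiniteDimensional 𝕜 E]
    {U W : Submodule 𝕜 E} (hle : W ≤ Uᗮ) (hdim : finrank 𝕜 U + finrank 𝕜 W = finrank 𝕜 E) :
    Uᗮ = W :=
  (eq_of_le_of_finrank_eq hle (by have := U.finrank_add_finrank_orthogonal; omega)).symm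

lemma orthogonal_span_pair_eq [FiniteDimensional 𝕜 E] (hE : finrank 𝕜 E = 4)
    {ψ₁ ψ₂ v₁ v₂ : E} (hψ : LinearIndependent 𝕜 ![ψ₁, ψ₂]) (hv : LinearIndependent 𝕜 ![v₁, v₂])
    (hortho : Submodule.span 𝕜 {ψ₁, ψ₂} ⟂ Submodule.span 𝕜 {v₁, v₂}) :
    (Submodule.span 𝕜 {ψ₁, ψ₂})ᗮ = Submodule.span 𝕜 {v₁, v₂} :=
  Submodule.orthogonal_eq_of_le_of_finrank_add_eq (Submodule.isOrtho_iff_le.1 hortho.symm)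
    (by rw [finrank_span_pair hψ, finrank_span_pair hv, hE])

end InnerProduct

section Tensor

variable {ι κ : Type*} [Fintype ι] [Fintype κ]

@[simp]
lemma tens_apply (a : EuclideanSpace ℂ ι) (b : EuclideanSpace ℂ κ) (p : ι × κ) :
    tens a b p = a p.1 * b p.2 := rfl

@[simp]
lemma zero_tens (b : EuclideanSpace ℂ κ) : tens (0 : EuclideanSpace ℂ ι) b = 0 := by
  ext; simp

lemma inner_tens (a x : EuclideanSpace ℂ ι) (b y : EuclideanSpace ℂ κ) :
    inner ℂ (tens a b) (tens x y) = inner ℂ a x * inner ℂ b y := by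
  simp only [PiLp.inner_apply, tens_apply, Fintype.sum_prod_type, Finset.sum_mul_sum]
  refine Finset.sum_congr rfl fun i _ => Finset.sum_congr rfl fun j _ => ?_
  simp only [RCLike.inner_apply, map_mul]
  ring

lemma tens_swap (a : EuclideanSpace ℂ ι) (b : EuclideanSpace ℂ κ) :
    LinearIsometryEquiv.piLpCongrLeft 2 ℂ ℂ (Equiv.prodComm ι κ) (tens a b) = tens b a := by
  ext p; simp [mul_comm]

lemma linearIndependent_tens_pair_of_left {u x : EuclideanSpace ℂ ι} {w y : EuclideanSpace ℂ κ}
    (hux : LinearIndependent ℂ ![u, x]) (hw : w ≠ 0) (hy : y ≠ 0) :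
    LinearIndependent ℂ ![tens u w, tens x y] := by
  rw [LinearIndependent.pair_iff]
  intro s t hst
  have hslice : ∀ j, s * w j = 0 ∧ t * y j = 0 := fun j =>
    hux.eq_zero_of_pair <| by
      ext i
      have hij := congr($hst (i, j))
      simp only [PiLp.add_apply, PiLp.smul_apply, tens_apply, smul_eq_mul, PiLp.zero_apply] at hij ⊢
      linear_combination hij
  constructor
  · by_contra hs
    exact hw (by ext j; simpa [hs] using (hslice j).1)
  · by_contra ht
    exact hy (by ext j; simpa [ht] using (hslice j).2)

lemma linearIndependent_tens_pair_of_right {u x : EuclideanSpace ℂ ι} {w y : EuclideanSpace ℂ κ}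
    (hu : u ≠ 0) (hx : x ≠ 0) (hwy : LinearIndependent ℂ ![w, y]) :
    LinearIndependent ℂ ![tens u w, tens x y] := by
  let σ := (LinearIsometryEquiv.piLpCongrLeft 2 ℂ ℂ (Equiv.prodComm κ ι)).toLinearEquiv
  have hcomp : ![tens u w, tens x y] = σ ∘ ![tens w u, tens y x] := by
    ext i : 1
    fin_cases i <;> simp [σ, tens_swap]
  rw [hcomp]
  exact (linearIndependent_tens_pair_of_left hwy hu hx).map' σ.toLinearMap σ.ker

end Tensor

lemma linearIndependent_e : LinearIndependent ℂ ![e 0, e 1] := by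
  rw [LinearIndependent.pair_iff]
  intro s t hst
  exact ⟨by simpa [e] using congr($hst 0), by simpa [e] using congr($hst 1)⟩

theorem stmt_6 (ψ₁ ψ₂ : EuclideanSpace ℂ (Fin 2 × Fin 2))
    (h : LinearIndependent ℂ ![ψ₁, ψ₂])
    (h₁ : ∃ a b, ψ₁ = tens a b) (h₂ : ∃ a b, ψ₂ = tens a b) :
    ∃ (a₁ b₁ a₂ b₂ : EuclideanSpace ℂ (Fin 2)),
      (Submodule.span ℂ {ψ₁, ψ₂})ᗮ = Submodule.span ℂ {tens a₁ b₁, tens a₂ b₂} := by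
  obtain ⟨a, b, rfl⟩ := h₁
  obtain ⟨c, d, rfl⟩ := h₂
  have ha : a ≠ 0 := by rintro rfl; simpa using h.ne_zero 0
  have h2 : 2 ≤ Module.finrank ℂ (EuclideanSpace ℂ (Fin 2)) := by simp
  obtain ⟨a', ha', haa'⟩ := exists_ne_zero_inner_eq_zero h2 a
  by_cases hac : LinearIndependent ℂ ![a, c]
  · obtain ⟨b', hb', hbb'⟩ := exists_ne_zero_inner_eq_zero h2 b
    obtain ⟨c', hc', hcc'⟩ := exists_ne_zero_inner_eq_zero h2 c
    obtain ⟨d', hd', hdd'⟩ := exists_ne_zero_inner_eq_zero h2 d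
    refine ⟨a', d', c', b', orthogonal_span_pair_eq (by simp) h
      (linearIndependent_tens_pair_of_left
        (linearIndependent_pair_of_inner_eq_zero (by simp) hac ha' hc' haa' hcc') hd' hb') ?_⟩
    simp [inner_tens, haa', hbb', hcc', hdd']
  · obtain ⟨r, rfl⟩ : ∃ r : ℂ, r • a = c := by simpa [LinearIndependent.pair_iff' ha] using hac
    refine ⟨a', e 0, a', e 1, orthogonal_span_pair_eq (by simp) h
      (linearIndependent_tens_pair_of_right ha' ha' linearIndependent_e) ?_⟩
    simp [inner_tens, haa']
end

section
/- Let ψ₁ = α₁·(e₀⊗e₀) + α₂·(e₁⊗e₁), ψ₂ = β₁·(e₀⊗e₀) + β₂·(e₁⊗e₁) with {ψ₁, ψ₂} linearly independent and all of α₁, α₂, β₁, β₂ nonzero, and let ψ₃ = e₀ ⊗ e₁. Then there is NO product vector φ = a ⊗ b with ⟨ψ₂, φ⟩ = 0, ⟨ψ₃, φ⟩ = 0, and ⟨ψ₁, φ⟩ ≠ 0. -/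
theorem inner_tens_tens {ι κ : Type*} [Fintype ι] [Fintype κ]
    (a c : EuclideanSpace ℂ ι) (b d : EuclideanSpace ℂ κ) :
    inner ℂ (tens a b) (tens c d) = inner ℂ a c * inner ℂ b d := by
  simp only [tens, PiLp.inner_apply, RCLike.inner_apply, Fintype.sum_prod_type,
    Finset.sum_mul_sum, map_mul]
  exact Finset.sum_congr rfl fun _ _ => Finset.sum_congr rfl fun _ _ => by ring

theorem inner_tens_e_e (i j : Fin 2) (a b : EuclideanSpace ℂ (Fin 2)) :
    inner ℂ (tens (e i) (e j)) (tens a b) = a i * b j := by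
  simp [inner_tens_tens, e, EuclideanSpace.inner_single_left]

theorem eq_zero_and_eq_zero_of_mul_eq_zero_of_add_eq_zero {R : Type*} [CommRing R]
    [NoZeroDivisors R] {p q x y : R} (hp : p ≠ 0) (hq : q ≠ 0) (hxy : x * y = 0)
    (h : p * x + q * y = 0) : x = 0 ∧ y = 0 := by
  rcases mul_eq_zero.mp hxy with hx | hy
  · subst hx
    simpa [hq] using h
  · subst hy
    simpa [hp] using h

theorem stmt_10_general (α₁ α₂ β₁ β₂ : ℂ)
    (hβ₁ : β₁ ≠ 0) (hβ₂ : β₂ ≠ 0)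
    (ψ₁ ψ₂ ψ₃ : EuclideanSpace ℂ (Fin 2 × Fin 2))
    (hψ₁ : ψ₁ = α₁ • tens (e 0) (e 0) + α₂ • tens (e 1) (e 1))
    (hψ₂ : ψ₂ = β₁ • tens (e 0) (e 0) + β₂ • tens (e 1) (e 1))
    (hψ₃ : ψ₃ = tens (e 0) (e 1)) :
    ¬ ∃ (a b : EuclideanSpace ℂ (Fin 2)),
      (inner ℂ ψ₂ (tens a b) : ℂ) = 0 ∧ (inner ℂ ψ₃ (tens a b) : ℂ) = 0 ∧
      (inner ℂ ψ₁ (tens a b) : ℂ) ≠ 0 := by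
  rintro ⟨a, b, h₂, h₃, h₁⟩
  subst hψ₁ hψ₂ hψ₃
  simp only [inner_add_left, inner_smul_left, inner_tens_e_e] at h₁ h₂ h₃
  have hdiag : (a 0 * b 0) * (a 1 * b 1) = 0 := by linear_combination (a 1 * b 0) * h₃
  obtain ⟨h₀₀, h₁₁⟩ := eq_zero_and_eq_zero_of_mul_eq_zero_of_add_eq_zero
    ((map_ne_zero _).mpr hβ₁) ((map_ne_zero _).mpr hβ₂) hdiag h₂
  exact h₁ (by rw [h₀₀, h₁₁]; ring)

theorem stmt_10 (α₁ α₂ β₁ β₂ : ℂ) (hα₁ : α₁ ≠ 0) (hα₂ : α₂ ≠ 0)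
    (hβ₁ : β₁ ≠ 0) (hβ₂ : β₂ ≠ 0)
    (ψ₁ ψ₂ ψ₃ : EuclideanSpace ℂ (Fin 2 × Fin 2))
    (hψ₁ : ψ₁ = α₁ • tens (e 0) (e 0) + α₂ • tens (e 1) (e 1))
    (hψ₂ : ψ₂ = β₁ • tens (e 0) (e 0) + β₂ • tens (e 1) (e 1))
    (hψ₃ : ψ₃ = tens (e 0) (e 1))
    (hli : LinearIndependent ℂ ![ψ₁, ψ₂]) :
    ¬ ∃ (a b : EuclideanSpace ℂ (Fin 2)),
      (inner ℂ ψ₂ (tens a b) : ℂ) = 0 ∧ (inner ℂ ψ₃ (tens a b) : ℂ) = 0 ∧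
      (inner ℂ ψ₁ (tens a b) : ℂ) ≠ 0 :=
  stmt_10_general α₁ α₂ β₁ β₂ hβ₁ hβ₂ ψ₁ ψ₂ ψ₃ hψ₁ hψ₂ hψ₃
end
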